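/- Generalized helicity conservation law (pointwise form): suppose u, K, L are C¹ vector fields and G a C¹ scalar field on ℝ × ℝ³ such that (i) div L = 0, (ii) L satisfies the Helmholtz equation ∂L/∂t + (∂L/∂x)u + L div u − (∂u/∂x)L = 0, and (iii) K satisfies DK/Dt + (∂u/∂x)ᵀK + ∇(G − |u|²/2) = 0. Then ∂/∂t (KᵀL) + div{ (KᵀL) u + (G − |u|²/2) L } = 0. -/

import Mathlib

/-!
By the product rules, with `H = G - |u|²/2`, the left-hand side is
`∂ₜK·L + K·∂ₜL + ∇(K·L)·u + (K·L) div u + ∇H·L + H div L`.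
Solving the equations of `K` and `L` for `∂ₜK` and `∂ₜL` and substituting, the stretching
terms `±K·(∂u/∂x)L` cancel, the advection terms `(∂K/∂x)u·L + K·(∂L/∂x)u` cancel against
`∇(K·L)·u`, the terms `(K·L) div u` and `∇H·L` cancel in pairs, and `H div L` vanishes.
-/

open Matrix

noncomputable section

abbrev V3 := Fin 3 → ℝ

/-- spatial partial derivative in direction `i` -/
def pd (i : Fin 3) (f : V3 → ℝ) (x : V3) : ℝ := fderiv ℝ f x (Pi.single i 1)

/-- gradient of a scalar field -/
def grad (f : V3 → ℝ) (x : V3) : V3 := fun i => pd i f x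

/-- divergence of a vector field -/
def vdiv (v : V3 → V3) (x : V3) : ℝ := ∑ i, pd i (fun y => v y i) x

/-- spatial Jacobian matrix ∂v/∂x -/
def jac (v : V3 → V3) (x : V3) : Matrix (Fin 3) (Fin 3) ℝ := fun i j => pd j (fun y => v y i) x

/-- curl of a vector field -/
def curl (v : V3 → V3) (x : V3) : V3 :=
  ![pd 1 (fun y => v y 2) x - pd 2 (fun y => v y 1) x,
    pd 2 (fun y => v y 0) x - pd 0 (fun y => v y 2) x,
    pd 0 (fun y => v y 1) x - pd 1 (fun y => v y 0) x]

/-- cross product in ℝ³ -/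
def cross (a b : V3) : V3 :=
  ![a 1 * b 2 - a 2 * b 1, a 2 * b 0 - a 0 * b 2, a 0 * b 1 - a 1 * b 0]

/-- partial time derivative of a scalar field -/
def pt (f : ℝ → V3 → ℝ) (t : ℝ) (x : V3) : ℝ := deriv (fun s => f s x) t

/-- partial time derivative of a vector field -/
def ptV (f : ℝ → V3 → V3) (t : ℝ) (x : V3) : V3 := fun i => pt (fun t x => f t x i) t x

/-- material derivative D/Dt = ∂/∂t + uᵀ∇ of a scalar field -/
def Dmat (u : ℝ → V3 → V3) (f : ℝ → V3 → ℝ) (t : ℝ) (x : V3) : ℝ :=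
  pt f t x + ∑ i, u t x i * pd i (f t) x

/-- material derivative of a vector field, componentwise -/
def DmatV (u f : ℝ → V3 → V3) (t : ℝ) (x : V3) : V3 :=
  fun i => Dmat u (fun t x => f t x i) t x

section SpatialDerivatives

variable {x : V3} (i : Fin 3)

lemma pd_add {f g : V3 → ℝ} (hf : DifferentiableAt ℝ f x) (hg : DifferentiableAt ℝ g x) :
    pd i (fun y => f y + g y) x = pd i f x + pd i g x := by
  simp only [pd, fderiv_fun_add hf hg, _root_.add_apply]

lemma pd_mul {f g : V3 → ℝ} (hf : DifferentiableAt ℝ f x) (hg : DifferentiableAt ℝ g x) :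
    pd i (fun y => f y * g y) x = pd i f x * g x + f x * pd i g x := by
  simp only [pd, fderiv_fun_mul hf hg, _root_.add_apply, _root_.smul_apply, smul_eq_mul]
  ring

lemma pd_sum {ι : Type*} (s : Finset ι) {f : ι → V3 → ℝ}
    (hf : ∀ j ∈ s, DifferentiableAt ℝ (f j) x) :
    pd i (fun y => ∑ j ∈ s, f j y) x = ∑ j ∈ s, pd i (f j) x := by
  simp only [pd, fderiv_fun_sum hf, _root_.sum_apply]

variable {v w : V3 → V3}

lemma grad_dotProduct (hv : DifferentiableAt ℝ v x) (hw : DifferentiableAt ℝ w x) :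
    grad (fun y => v y ⬝ᵥ w y) x = (jac v x)ᵀ *ᵥ w x + (jac w x)ᵀ *ᵥ v x := by
  have hvi := differentiableAt_pi.mp hv
  have hwi := differentiableAt_pi.mp hw
  ext i
  simp only [grad, dotProduct]
  rw [pd_sum i _ fun j _ => (hvi j).fun_mul (hwi j)]
  simp only [pd_mul i (hvi _) (hwi _), Finset.sum_add_distrib, Pi.add_apply, mulVec,
    transpose_apply, jac, dotProduct, mul_comm (v x _)]

lemma vdiv_add (hv : DifferentiableAt ℝ v x) (hw : DifferentiableAt ℝ w x) :
    vdiv (fun y => v y + w y) x = vdiv v x + vdiv w x := by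
  simp only [vdiv, Pi.add_apply, Finset.sum_add_distrib,
    pd_add _ (differentiableAt_pi.mp hv _) (differentiableAt_pi.mp hw _)]

lemma vdiv_smul {f : V3 → ℝ} (hf : DifferentiableAt ℝ f x) (hv : DifferentiableAt ℝ v x) :
    vdiv (fun y => f y • v y) x = grad f x ⬝ᵥ v x + f x * vdiv v x := by
  simp only [vdiv, Pi.smul_apply, smul_eq_mul, pd_mul _ hf (differentiableAt_pi.mp hv _),
    Finset.sum_add_distrib, Finset.mul_sum, grad, dotProduct]

end SpatialDerivatives

lemma pt_dotProduct {K L : ℝ → V3 → V3} {t : ℝ} {x : V3}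
    (hK : DifferentiableAt ℝ (fun s => K s x) t) (hL : DifferentiableAt ℝ (fun s => L s x) t) :
    pt (fun s y => K s y ⬝ᵥ L s y) t x = ptV K t x ⬝ᵥ L t x + K t x ⬝ᵥ ptV L t x := by
  have hKi := differentiableAt_pi.mp hK
  have hLi := differentiableAt_pi.mp hL
  simp only [pt, dotProduct]
  rw [deriv_fun_sum fun i _ => (hKi i).fun_mul (hLi i)]
  simp only [deriv_fun_mul (hKi _) (hLi _), Finset.sum_add_distrib, ptV, pt]

lemma DmatV_eq_ptV_add_jac_mulVec (u F : ℝ → V3 → V3) (t : ℝ) (x : V3) :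
    DmatV u F t x = ptV F t x + jac (F t) x *ᵥ u t x := by
  ext i
  simp only [DmatV, Dmat, ptV, Pi.add_apply, mulVec, dotProduct, jac, mul_comm (u t x _)]

section Differentiability

variable {𝕜 E F : Type*} [NontriviallyNormedField 𝕜] [NormedAddCommGroup E] [NormedSpace 𝕜 E]
  [NormedAddCommGroup F] [NormedSpace 𝕜 F]

lemma DifferentiableAt.dotProduct {n : Type*} [Fintype n] {v w : E → n → 𝕜} {x : E}
    (hv : DifferentiableAt 𝕜 v x) (hw : DifferentiableAt 𝕜 w x) :
    DifferentiableAt 𝕜 (fun y => v y ⬝ᵥ w y) x :=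
  DifferentiableAt.fun_sum fun i _ =>
    (differentiableAt_pi.mp hv i).fun_mul (differentiableAt_pi.mp hw i)

variable {f : 𝕜 → E → F} {t : 𝕜} {x : E}

lemma DifferentiableAt.differentiableAt_uncurry_left
    (hf : DifferentiableAt 𝕜 (Function.uncurry f) (t, x)) :
    DifferentiableAt 𝕜 (fun s => f s x) t :=
  hf.comp (f := fun s => (s, x)) t
    (differentiableAt_fun_id.prodMk (differentiableAt_const x))

lemma DifferentiableAt.differentiableAt_uncurry_right
    (hf : DifferentiableAt 𝕜 (Function.uncurry f) (t, x)) :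
    DifferentiableAt 𝕜 (f t) x :=
  hf.comp x ((differentiableAt_const t).prodMk differentiableAt_fun_id)

end Differentiability

/-- Generalized helicity conservation law, pointwise form. -/
theorem generalized_helicity_conservation (u K L : ℝ → V3 → V3) (G : ℝ → V3 → ℝ)
    (hu : ContDiff ℝ 1 (Function.uncurry u))
    (hK : ContDiff ℝ 1 (Function.uncurry K))
    (hL : ContDiff ℝ 1 (Function.uncurry L))
    (hG : ContDiff ℝ 1 (Function.uncurry G))
    (hdivL : ∀ t x, vdiv (L t) x = 0)
    (hHelmholtz : ∀ t x, ptV L t x + jac (L t) x *ᵥ u t x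
        + vdiv (u t) x • L t x - jac (u t) x *ᵥ L t x = 0)
    (hKeq : ∀ t x, DmatV u K t x + (jac (u t) x)ᵀ *ᵥ K t x
        + grad (fun y => G t y - (u t y ⬝ᵥ u t y) / 2) x = 0)
    (t : ℝ) (x : V3) :
    pt (fun s y => K s y ⬝ᵥ L s y) t x
      + vdiv (fun y => (K t y ⬝ᵥ L t y) • u t y
          + (G t y - (u t y ⬝ᵥ u t y) / 2) • L t y) x = 0 := by
  have dK := hK.differentiable one_ne_zero (t, x)
  have dL := hL.differentiable one_ne_zero (t, x)
  have dKx := dK.differentiableAt_uncurry_right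
  have dLx := dL.differentiableAt_uncurry_right
  have dux := (hu.differentiable one_ne_zero (t, x)).differentiableAt_uncurry_right
  have dGx := (hG.differentiable one_ne_zero (t, x)).differentiableAt_uncurry_right
  have dKL := dKx.dotProduct dLx
  have dH : DifferentiableAt ℝ (fun y => G t y - (u t y ⬝ᵥ u t y) / 2) x := by
    have duu := dux.dotProduct dux
    fun_prop
  have hKt : ptV K t x = -(jac (K t) x *ᵥ u t x) - (jac (u t) x)ᵀ *ᵥ K t x
      - grad (fun y => G t y - (u t y ⬝ᵥ u t y) / 2) x := by
    rw [← sub_eq_zero, ← hKeq t x, DmatV_eq_ptV_add_jac_mulVec]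
    abel
  have hLt : ptV L t x = -(jac (L t) x *ᵥ u t x) - vdiv (u t) x • L t x
      + jac (u t) x *ᵥ L t x := by
    rw [← sub_eq_zero, ← hHelmholtz t x]
    abel
  rw [pt_dotProduct dK.differentiableAt_uncurry_left dL.differentiableAt_uncurry_left,
    vdiv_add (dKL.fun_smul dux) (dH.fun_smul dLx), vdiv_smul dKL dux, vdiv_smul dH dLx,
    grad_dotProduct dKx dLx, hdivL, hKt, hLt]
  simp only [sub_dotProduct, dotProduct_sub, neg_dotProduct, dotProduct_neg, add_dotProduct,
    dotProduct_add, dotProduct_smul, mulVec_transpose, ← dotProduct_mulVec, smul_eq_mul]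
  rw [dotProduct_comm (jac (K t) x *ᵥ u t x), dotProduct_comm (K t x) (jac (L t) x *ᵥ u t x)]
  ring
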